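/- arXiv:math/0209270 — 5 statements merged into one kernel-verified Lean document; each statement's English description precedes it below -/
import Mathlib

section
/- (0-2 law, Proposition 2.12.) Let A be a unital C*-algebra and P : A → A a bounded linear map that is unital (P 1 = 1) and positive. Suppose there exist natural numbers m, k ≥ 1 and a bounded positive linear map S : A → A such that S 1 is invertible in A and both P^{m+k} − S and P^m − S are positive maps. Then ‖P^{n+k} − P^n‖ → 0 as n → ∞, where ‖·‖ is the operator norm. -/
/-!
Write `P ^ (m + k) = S + R'` and `P ^ m = S + R` with `R, R'` positive, and use
`P ^ (n + m + k) = ½ (P ^ (m + k) P ^ n + P ^ m P ^ (n + k))` to run two copies of the chain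
whose times differ by `d * k`. Pairing the `S`-parts, of mass at least `ε > 0`, changes the lag
`d` by `±1`, while pairing the remainders keeps it; once the lag is `0` the copies agree. So the
uncoupled mass after `s` rounds is at most the probability that a lazy simple random walk
started at `1` has not hit `0` within `s` steps, which tends to `0` by recurrence.
-/

open Filter Topology

namespace ZeroTwoLaw

/-- Probability that a lazy simple random walk on `ℕ` started at `d`, which steps by `±1` with
probability `ε / 2` each, has not been absorbed at `0` within `s` steps. -/
noncomputable def survival (ε : ℝ) : ℕ → ℕ → ℝ
  | 0, 0 => 0
  | 0, _ + 1 => 1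
  | _ + 1, 0 => 0
  | s + 1, d + 1 =>
    (1 - ε) * survival ε s (d + 1) + ε / 2 * (survival ε s d + survival ε s (d + 2))

section survival

variable {ε : ℝ}

@[simp]
lemma survival_zero_right (s : ℕ) : survival ε s 0 = 0 := by
  cases s <;> rfl

lemma survival_succ_succ (s d : ℕ) : survival ε (s + 1) (d + 1) =
    (1 - ε) * survival ε s (d + 1) + ε / 2 * (survival ε s d + survival ε s (d + 2)) := rfl

section unitInterval

variable (hε₀ : 0 ≤ ε) (hε₁ : ε ≤ 1)
include hε₀ hε₁

lemma survival_mem_Icc (s d : ℕ) : survival ε s d ∈ Set.Icc 0 1 := by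
  induction s generalizing d with
  | zero => cases d <;> simp [survival]
  | succ s ih =>
    cases d with
    | zero => simp
    | succ d =>
      obtain ⟨h₀, h₀'⟩ := ih d
      obtain ⟨h₁, h₁'⟩ := ih (d + 1)
      obtain ⟨h₂, h₂'⟩ := ih (d + 2)
      rw [survival_succ_succ]
      constructor <;> nlinarith

lemma survival_add_le (s d : ℕ) :
    survival ε s d + survival ε s (d + 2) ≤ 2 * survival ε s (d + 1) := by
  induction s generalizing d with
  | zero => cases d <;> norm_num [survival]
  | succ s ih =>
    cases d with
    | zero =>
      have h₀ := ih 0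
      have h₁ := ih 1
      simp only [survival_zero_right, zero_add, survival_succ_succ] at h₀ ⊢
      nlinarith
    | succ d =>
      have h₀ := ih d
      have h₁ := ih (d + 1)
      have h₂ := ih (d + 2)
      simp only [survival_succ_succ, add_assoc, Nat.reduceAdd] at h₁ h₂ ⊢
      nlinarith

lemma survival_succ_le (s d : ℕ) : survival ε (s + 1) d ≤ survival ε s d := by
  cases d with
  | zero => simp
  | succ d =>
    have := survival_add_le hε₀ hε₁ s d
    rw [survival_succ_succ]
    nlinarith

end unitInterval

/-- The walk is recurrent: the limit of `survival ε · d` is a bounded harmonic function of `d`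
vanishing at `0`, hence linear, hence zero. -/
lemma tendsto_survival (hε : 0 < ε) (hε₁ : ε ≤ 1) :
    Tendsto (fun s ↦ survival ε s 1) atTop (𝓝 0) := by
  have hbdd (d : ℕ) : BddBelow (Set.range fun s ↦ survival ε s d) :=
    ⟨0, by rintro _ ⟨s, rfl⟩; exact (survival_mem_Icc hε.le hε₁ s d).1⟩
  set L : ℕ → ℝ := fun d ↦ ⨅ s, survival ε s d
  have hL (d : ℕ) : Tendsto (fun s ↦ survival ε s d) atTop (𝓝 (L d)) :=
    tendsto_atTop_ciInf (antitone_nat_of_succ_le (survival_succ_le hε.le hε₁ · d)) (hbdd d)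
  have hL_le_one (d : ℕ) : L d ≤ 1 := ciInf_le_of_le (hbdd d) 0 (survival_mem_Icc hε.le hε₁ 0 d).2
  have hL_harmonic (d : ℕ) : L d + L (d + 2) = 2 * L (d + 1) := by
    have h := (hL (d + 1)).comp (tendsto_add_atTop_nat 1)
    simp only [Function.comp_def, survival_succ_succ] at h
    have := tendsto_nhds_unique h
      (((hL (d + 1)).const_mul _).add (((hL d).add (hL (d + 2))).const_mul _))
    have : ε * (L d + L (d + 2) - 2 * L (d + 1)) = 0 := by linarith
    linarith [(mul_eq_zero.1 this).resolve_left hε.ne']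
  have hL_linear (d : ℕ) : L d = d * L 1 := by
    induction d using Nat.strong_induction_on with
    | _ d ih =>
      match d with
      | 0 => simp [L]
      | 1 => simp
      | d + 2 =>
        have := hL_harmonic d
        rw [ih d (by omega), ih (d + 1) (by omega)] at this
        push_cast at this ⊢
        linarith
  have hL₁ : L 1 = 0 := by
    by_contra h
    have hpos : 0 < L 1 := (le_ciInf fun s ↦ (survival_mem_Icc hε.le hε₁ s 1).1).lt_of_ne' h
    obtain ⟨d, hd⟩ := exists_nat_gt (1 / L 1)
    have := hL_le_one d
    rw [hL_linear, ← le_div_iff₀ hpos] at this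
    linarith
  simpa [hL₁] using hL 1

end survival

section PositiveMap

variable {A : Type*} [CStarAlgebra A] [PartialOrder A]

def IsPositiveMap (T : A →L[ℂ] A) : Prop := ∀ x, 0 ≤ x → 0 ≤ T x

namespace IsPositiveMap

variable {T U : A →L[ℂ] A}

lemma mul (hT : IsPositiveMap T) (hU : IsPositiveMap U) : IsPositiveMap (T * U) :=
  fun x hx ↦ hT _ (hU x hx)

lemma pow (hT : IsPositiveMap T) (n : ℕ) : IsPositiveMap (T ^ n) := by
  induction n with
  | zero => exact fun x hx ↦ hx
  | succ n ih => rw [pow_succ]; exact ih.mul hT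

variable [StarOrderedRing A]

lemma monotone (hT : IsPositiveMap T) : Monotone T := fun x y hxy ↦ by
  simpa using hT (y - x) (sub_nonneg.2 hxy)

lemma add (hT : IsPositiveMap T) (hU : IsPositiveMap U) : IsPositiveMap (T + U) :=
  fun x hx ↦ add_nonneg (hT x hx) (hU x hx)

lemma smul (hT : IsPositiveMap T) {c : ℝ} (hc : 0 ≤ c) : IsPositiveMap (c • T) := fun x hx ↦ by
  rw [smul_apply]
  exact smul_nonneg hc (hT x hx)

lemma opNorm_le (hT : IsPositiveMap T) : ‖T‖ ≤ 4 * ‖T 1‖ := by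
  refine T.opNorm_le_bound (by positivity) fun x ↦ ?_
  obtain ⟨y, hy, hy_norm, hxy⟩ := CStarAlgebra.exists_sum_four_nonneg x
  let T' : A →ₚ[ℂ] A := .mk₀ T.toLinearMap hT
  calc ‖T x‖ ≤ ∑ i : Fin 4, ‖T (y i)‖ := by
        rw [hxy]
        simpa [norm_smul] using norm_sum_le _ fun i : Fin 4 ↦ Complex.I ^ (i : ℕ) • T (y i)
    _ ≤ ∑ _i : Fin 4, ‖T 1‖ * ‖x‖ := by
        gcongr with i
        exact (T'.norm_apply_le_of_nonneg _ (hy i)).trans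
          (mul_le_mul_of_nonneg_left (hy_norm i) (norm_nonneg _))
    _ = 4 * ‖T 1‖ * ‖x‖ := by simp [mul_assoc]

end IsPositiveMap

end PositiveMap

section Coupling

variable {A : Type*} [CStarAlgebra A] [PartialOrder A]

/-- If `D = T' - T`, then `T` and `T'` share the common part `T - E = T' - E'` and differ only by
positive pieces of mass at most `b`. -/
def IsDiffOfPosLE (b : A) (D : A →L[ℂ] A) : Prop :=
  ∃ E E' : A →L[ℂ] A, IsPositiveMap E ∧ IsPositiveMap E' ∧ E 1 ≤ b ∧ E' 1 ≤ b ∧ D = E' - E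

namespace IsDiffOfPosLE

variable {b b' : A} {D D' : A →L[ℂ] A}

lemma zero : IsDiffOfPosLE (0 : A) 0 :=
  ⟨0, 0, fun _ _ ↦ le_rfl, fun _ _ ↦ le_rfl, le_rfl, le_rfl, (sub_self 0).symm⟩

lemma mono (h : IsDiffOfPosLE b D) (hb : b ≤ b') : IsDiffOfPosLE b' D := by
  obtain ⟨E, E', hE, hE', hE1, hE'1, rfl⟩ := h
  exact ⟨E, E', hE, hE', hE1.trans hb, hE'1.trans hb, rfl⟩

variable [StarOrderedRing A]

lemma add (h : IsDiffOfPosLE b D) (h' : IsDiffOfPosLE b' D') :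
    IsDiffOfPosLE (b + b') (D + D') := by
  obtain ⟨E, E', hE, hE', hE1, hE'1, rfl⟩ := h
  obtain ⟨F, F', hF, hF', hF1, hF'1, rfl⟩ := h'
  exact ⟨E + F, E' + F', hE.add hF, hE'.add hF', add_le_add hE1 hF1, add_le_add hE'1 hF'1,
    by abel⟩

lemma mul_left {Q : A →L[ℂ] A} (hQ : IsPositiveMap Q) (h : IsDiffOfPosLE b D) :
    IsDiffOfPosLE (Q b) (Q * D) := by
  obtain ⟨E, E', hE, hE', hE1, hE'1, rfl⟩ := h
  exact ⟨Q * E, Q * E', hQ.mul hE, hQ.mul hE', hQ.monotone hE1, hQ.monotone hE'1, mul_sub _ _ _⟩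

lemma smul (h : IsDiffOfPosLE b D) {c : ℝ} (hc : 0 ≤ c) : IsDiffOfPosLE (c • b) (c • D) := by
  obtain ⟨E, E', hE, hE', hE1, hE'1, rfl⟩ := h
  refine ⟨c • E, c • E', hE.smul hc, hE'.smul hc, ?_, ?_, smul_sub _ _ _⟩ <;>
    rw [smul_apply] <;> exact smul_le_smul_of_nonneg_left ‹_› hc

lemma opNorm_le {w : ℝ} (h : IsDiffOfPosLE (w • 1) D) (hw : 0 ≤ w) : ‖D‖ ≤ 8 * w := by
  obtain ⟨E, E', hE, hE', hE1, hE'1, rfl⟩ := h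
  have hnorm {F : A →L[ℂ] A} (hF : IsPositiveMap F) (hF1 : F 1 ≤ w • 1) : ‖F‖ ≤ 4 * w := by
    have hF1' : ‖F 1‖ ≤ w := by
      rwa [CStarAlgebra.norm_le_iff_le_algebraMap _ hw (hF 1 zero_le_one),
        Algebra.algebraMap_eq_smul_one]
    linarith [hF.opNorm_le]
  calc ‖E' - E‖ ≤ ‖E'‖ + ‖E‖ := norm_sub_le _ _
    _ ≤ 4 * w + 4 * w := add_le_add (hnorm hE' hE'1) (hnorm hE hE1)
    _ = 8 * w := by ring

/-- One step of the coupling: `M' = P ^ (m + k)` and `M = P ^ m` both contain `S`; the `S`-parts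
are paired so that the lag between the two copies moves by `±1`, the remainders so that it stays. -/
lemma coupling_step {S M M' X₀ X₁ Y₀ Y₁ : A →L[ℂ] A} {ε w₀ w₁ w₂ : ℝ}
    (hS : IsPositiveMap S) (hMS : IsPositiveMap (M - S)) (hM'S : IsPositiveMap (M' - S))
    (hM1 : M 1 = 1) (hM'1 : M' 1 = 1) (hεS : ε • (1 : A) ≤ S 1) (hw : w₀ + w₂ ≤ 2 * w₁)
    (h₀₁ : IsDiffOfPosLE (w₂ • 1) (Y₁ - X₀)) (h₁₀ : IsDiffOfPosLE (w₀ • 1) (Y₀ - X₁))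
    (h₀₀ : IsDiffOfPosLE (w₁ • 1) (Y₀ - X₀)) (h₁₁ : IsDiffOfPosLE (w₁ • 1) (Y₁ - X₁)) :
    IsDiffOfPosLE (((1 - ε) * w₁ + ε / 2 * (w₀ + w₂)) • 1)
      ((2⁻¹ : ℝ) • (M' * Y₀ + M * Y₁) - (2⁻¹ : ℝ) • (M' * X₀ + M * X₁)) := by
  have h := (((h₀₁.mul_left hS).add (h₁₀.mul_left hS)).add
    ((h₀₀.mul_left hM'S).add (h₁₁.mul_left hMS))).smul (c := 2⁻¹) (by norm_num)
  have hD : (2⁻¹ : ℝ) • (M' * Y₀ + M * Y₁) - (2⁻¹ : ℝ) • (M' * X₀ + M * X₁) =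
      (2⁻¹ : ℝ) • (S * (Y₁ - X₀) + S * (Y₀ - X₁) +
        ((M' - S) * (Y₀ - X₀) + (M - S) * (Y₁ - X₁))) := by
    simp only [mul_sub, sub_mul]
    module
  rw [hD]
  refine h.mono ?_
  have hc : 0 ≤ w₁ - (w₀ + w₂) / 2 := by linarith
  simp only [ContinuousLinearMap.map_smul_of_tower, sub_apply, hM1, hM'1]
  calc _ = w₁ • (1 : A) - (w₁ - (w₀ + w₂) / 2) • S 1 := by module
    _ ≤ w₁ • (1 : A) - (w₁ - (w₀ + w₂) / 2) • (ε • 1) :=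
      sub_le_sub_left (smul_le_smul_of_nonneg_left hεS hc) _
    _ = _ := by module

end IsDiffOfPosLE

end Coupling

lemma pow_apply_of_apply_eq {R M : Type*} [Semiring R] [AddCommMonoid M] [Module R M]
    [TopologicalSpace M] {P : M →L[R] M} {x : M} (hx : P x = x) (n : ℕ) : (P ^ n) x = x := by
  rw [FunLike.coe_pow_eq_iterate]
  exact Function.iterate_fixed hx n

lemma pow_add_eq_midpoint {R : Type*} [Ring R] [Module ℝ R] (P : R) (j m k : ℕ) :
    P ^ (j + (m + k)) = (2⁻¹ : ℝ) • (P ^ (m + k) * P ^ j + P ^ m * P ^ (j + k)) := by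
  rw [← pow_add, ← pow_add, show m + (j + k) = j + (m + k) by ring, add_comm (m + k),
    ← two_smul ℝ, smul_smul]
  norm_num

section Powers

variable {A : Type*} [CStarAlgebra A] [PartialOrder A] [StarOrderedRing A] {P S : A →L[ℂ] A}
  {m k : ℕ} {ε : ℝ}

lemma isDiffOfPosLE_pow_sub_pow (hP1 : P 1 = 1) (hP : IsPositiveMap P) (hS : IsPositiveMap S)
    (h₁ : IsPositiveMap (P ^ (m + k) - S)) (h₂ : IsPositiveMap (P ^ m - S))
    (hε₀ : 0 ≤ ε) (hε₁ : ε ≤ 1) (hεS : ε • (1 : A) ≤ S 1) (s d n : ℕ) (hn : s * (m + k) ≤ n) :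
    IsDiffOfPosLE (survival ε s d • 1) (P ^ (n + d * k) - P ^ n) := by
  induction s generalizing d n with
  | zero =>
    cases d with
    | zero => simpa using IsDiffOfPosLE.zero
    | succ d =>
      refine ⟨P ^ n, P ^ (n + (d + 1) * k), hP.pow _, hP.pow _, ?_, ?_, rfl⟩ <;>
        simp [survival, pow_apply_of_apply_eq hP1]
  | succ s ih =>
    cases d with
    | zero => simpa using IsDiffOfPosLE.zero
    | succ d =>
      obtain ⟨c, rfl⟩ := Nat.exists_eq_add_of_le hn
      have hc : s * (m + k) ≤ s * (m + k) + c + k := by omega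
      rw [show (s + 1) * (m + k) + c + (d + 1) * k = s * (m + k) + c + (d + 1) * k + (m + k) by
          ring, show (s + 1) * (m + k) + c = s * (m + k) + c + (m + k) by ring,
        pow_add_eq_midpoint, pow_add_eq_midpoint, survival_succ_succ]
      refine IsDiffOfPosLE.coupling_step hS h₂ h₁ (pow_apply_of_apply_eq hP1 _)
        (pow_apply_of_apply_eq hP1 _) hεS (survival_add_le hε₀ hε₁ s d) ?_ ?_ ?_ ?_
      · convert ih (d + 2) _ le_self_add using 3; ring
      · convert ih d _ hc using 3; ring
      · exact ih (d + 1) _ le_self_add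
      · convert ih (d + 1) _ hc using 3; ring

end Powers

lemma exists_smul_one_le {A : Type*} [CStarAlgebra A] [PartialOrder A] [StarOrderedRing A]
    {a : A} (ha : IsStrictlyPositive a) : ∃ ε : ℝ, 0 < ε ∧ ε ≤ 1 ∧ ε • (1 : A) ≤ a := by
  rcases subsingleton_or_nontrivial A with hA | hA
  · exact ⟨1, one_pos, le_rfl, (Subsingleton.elim _ _).le⟩
  obtain ⟨r, hr, hra⟩ := (CFC.exists_pos_algebraMap_le_iff ha.isSelfAdjoint).2
    fun x hx ↦ ha.spectrum_pos hx
  refine ⟨min r 1, by positivity, min_le_right _ _, ?_⟩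
  rw [← Algebra.algebraMap_eq_smul_one]
  exact (algebraMap_mono A (min_le_left r 1)).trans hra

end ZeroTwoLaw

open ZeroTwoLaw

theorem zero_two_law_general {A : Type*} [NormedRing A] [StarRing A] [CStarRing A]
    [CompleteSpace A] [NormedAlgebra ℂ A] [StarModule ℂ A]
    [PartialOrder A] [StarOrderedRing A]
    (P : A →L[ℂ] A) (hP1 : P 1 = 1) (hPpos : ∀ x : A, 0 ≤ x → 0 ≤ P x)
    (m k : ℕ) (hk : 1 ≤ k)
    (S : A →L[ℂ] A) (hSpos : ∀ x : A, 0 ≤ x → 0 ≤ S x) (hS1 : IsUnit (S 1))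
    (h1 : ∀ x : A, 0 ≤ x → S x ≤ (P ^ (m + k)) x)
    (h2 : ∀ x : A, 0 ≤ x → S x ≤ (P ^ m) x) :
    Filter.Tendsto (fun n : ℕ => ‖P ^ (n + k) - P ^ n‖) Filter.atTop (nhds 0) := by
  let _ : CStarAlgebra A := {}
  obtain ⟨ε, hε₀, hε₁, hεS⟩ := exists_smul_one_le (hS1.isStrictlyPositive (hSpos 1 zero_le_one))
  have hsub {T : A →L[ℂ] A} (hT : ∀ x : A, 0 ≤ x → S x ≤ T x) : IsPositiveMap (T - S) :=
    fun x hx ↦ sub_nonneg.2 (hT x hx)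
  have hbound (n : ℕ) : ‖P ^ (n + k) - P ^ n‖ ≤ 8 * survival ε (n / (m + k)) 1 := by
    refine IsDiffOfPosLE.opNorm_le ?_ (survival_mem_Icc hε₀.le hε₁ _ _).1
    simpa using isDiffOfPosLE_pow_sub_pow hP1 hPpos hSpos (hsub h1) (hsub h2) hε₀.le hε₁ hεS
      (n / (m + k)) 1 n (Nat.div_mul_le_self n (m + k))
  refine squeeze_zero (fun n ↦ norm_nonneg _) hbound ?_
  simpa using ((tendsto_survival hε₀ hε₁).comp
    (Nat.tendsto_div_const_atTop (by omega : m + k ≠ 0))).const_mul 8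

/-- **0-2 law** (Proposition 2.12). Let `A` be a unital C*-algebra and `P : A → A` a bounded
linear map which is unital and positive. Suppose there are `m, k ≥ 1` and a bounded positive
linear map `S : A → A` with `S 1` invertible such that `P^(m+k) - S` and `P^m - S` are positive
maps. Then `‖P^(n+k) - P^n‖ → 0` as `n → ∞`. -/
theorem zero_two_law {A : Type*} [NormedRing A] [StarRing A] [CStarRing A]
    [CompleteSpace A] [NormedAlgebra ℂ A] [StarModule ℂ A]
    [PartialOrder A] [StarOrderedRing A]
    (P : A →L[ℂ] A) (hP1 : P 1 = 1) (hPpos : ∀ x : A, 0 ≤ x → 0 ≤ P x)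
    (m k : ℕ) (hm : 1 ≤ m) (hk : 1 ≤ k)
    (S : A →L[ℂ] A) (hSpos : ∀ x : A, 0 ≤ x → 0 ≤ S x) (hS1 : IsUnit (S 1))
    (h1 : ∀ x : A, 0 ≤ x → S x ≤ (P ^ (m + k)) x)
    (h2 : ∀ x : A, 0 ≤ x → S x ≤ (P ^ m) x) :
    Filter.Tendsto (fun n : ℕ => ‖P ^ (n + k) - P ^ n‖) Filter.atTop (nhds 0) :=
  zero_two_law_general P hP1 hPpos m k hk S hSpos hS1 h1 h2
end

section
/- (Key norm estimate in the proof of the 0-2 law.) Let 𝔄 be a unital Banach algebra with ‖1‖ = 1 and let q ∈ 𝔄 satisfy ‖q‖ ≤ 1. Then 2^{−j} · ‖(1 + q)^j · (1 − q)‖ → 0 as j → ∞. -/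
open Finset Filter Topology

/-! Expanding the binomial, `(1 + q)^j (1 - q) = 1 + ∑ₖ (C(j, k+1) - C(j, k)) q^(k+1)`. As
`‖q^k‖ ≤ 1`, its norm is bounded by `1` plus the total variation of the unimodal sequence
`k ↦ C(j, k)`, which is `2 C(j, ⌊j/2⌋)`. Finally `(n + 1) C(2n, n)² ≤ 16ⁿ`, so
`2^(-j) C(j, ⌊j/2⌋) = O(1/√j)`. -/

theorem sum_range_abs_sub_of_unimodal {α : Type*} [AddCommGroup α] [LinearOrder α]
    [IsOrderedAddMonoid α] {f : ℕ → α} {m n : ℕ} (hmn : m ≤ n)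
    (hmono : ∀ k < m, f k ≤ f (k + 1)) (hanti : ∀ k, m ≤ k → f (k + 1) ≤ f k) :
    ∑ k ∈ range n, |f (k + 1) - f k| = (f m - f 0) + (f m - f n) := by
  rw [← sum_range_add_sum_Ico _ hmn]
  congr 1
  · rw [← sum_range_sub f m]
    exact sum_congr rfl fun k hk => abs_of_nonneg (sub_nonneg.2 (hmono k (mem_range.1 hk)))
  · rw [← neg_sub, ← sum_Ico_sub f hmn, ← sum_neg_distrib]
    exact sum_congr rfl fun k hk =>
      abs_of_nonpos (sub_nonpos.2 (hanti k (mem_Ico.1 hk).1))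

namespace Nat

theorem choose_succ_le_of_half_le {n k : ℕ} (h : n / 2 ≤ k) :
    n.choose (k + 1) ≤ n.choose k := by
  refine Nat.le_of_mul_le_mul_right (c := k + 1) ?_ k.succ_pos
  rw [choose_succ_right_eq]
  exact Nat.mul_le_mul_left _ (by omega)

theorem sum_range_abs_choose_succ_sub_choose (n : ℕ) :
    ∑ k ∈ range (n + 1), |(n.choose (k + 1) : ℝ) - n.choose k|
      = 2 * n.choose (n / 2) - 1 := by
  rw [sum_range_abs_sub_of_unimodal (f := fun k => (n.choose k : ℝ)) (m := n / 2) (by omega)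
    (fun k hk => by exact_mod_cast choose_le_succ_of_lt_half_left hk)
    (fun k hk => by exact_mod_cast choose_succ_le_of_half_le hk)]
  simp only [choose_zero_right, choose_succ_self, cast_one, CharP.cast_eq_zero]
  ring

theorem choose_half_le_two_mul_centralBinom (n : ℕ) :
    n.choose (n / 2) ≤ 2 * centralBinom (n / 2) := by
  calc n.choose (n / 2) ≤ (2 * (n / 2) + 1).choose (n / 2) := choose_le_choose _ (by omega)
    _ = (2 * (n / 2)).choose (n / 2) + (2 * (n / 2)).choose (n / 2 + 1) := by
      rw [← choose_symm_half, choose_succ_succ']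
    _ ≤ 2 * centralBinom (n / 2) := by
      have := choose_le_centralBinom (n / 2 + 1) (n / 2)
      rw [centralBinom_eq_two_mul_choose] at this ⊢
      omega

theorem succ_mul_centralBinom_sq_le (n : ℕ) : (n + 1) * centralBinom n ^ 2 ≤ 16 ^ n := by
  induction n with
  | zero => simp
  | succ n ih =>
    have hstep := succ_mul_centralBinom_succ n
    refine Nat.le_of_mul_le_mul_right (c := (n + 1) ^ 2) ?_ (by positivity)
    calc (n + 1 + 1) * centralBinom (n + 1) ^ 2 * (n + 1) ^ 2
        = (n + 2) * ((n + 1) * centralBinom (n + 1)) ^ 2 := by ring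
      _ = 4 * (2 * n + 1) ^ 2 * (n + 2) * centralBinom n ^ 2 := by rw [hstep]; ring
      _ ≤ 16 * (n + 1) ^ 3 * centralBinom n ^ 2 := Nat.mul_le_mul_right _ (by nlinarith)
      _ = 16 * (n + 1) ^ 2 * ((n + 1) * centralBinom n ^ 2) := by ring
      _ ≤ 16 * (n + 1) ^ 2 * 16 ^ n := by gcongr
      _ = 16 ^ (n + 1) * (n + 1) ^ 2 := by ring

theorem tendsto_centralBinom_div_four_pow :
    Tendsto (fun n => (centralBinom n : ℝ) / 4 ^ n) atTop (𝓝 0) := by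
  have hsq : Tendsto (fun n => ((centralBinom n : ℝ) / 4 ^ n) ^ 2) atTop (𝓝 0) := by
    refine squeeze_zero (fun n => by positivity) (fun n => ?_)
      tendsto_one_div_add_atTop_nhds_zero_nat
    have h := succ_mul_centralBinom_sq_le n
    rw [div_pow, ← pow_mul, show (4 : ℝ) ^ (n * 2) = 16 ^ n by rw [pow_mul']; norm_num,
      div_le_div_iff₀ (by positivity) (by positivity)]
    exact_mod_cast (by linarith : centralBinom n ^ 2 * (n + 1) ≤ 1 * 16 ^ n)
  have h := hsq.sqrt
  rw [Real.sqrt_zero] at h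
  exact h.congr fun n => Real.sqrt_sq (by positivity)

theorem tendsto_choose_half_div_two_pow :
    Tendsto (fun n => (n.choose (n / 2) : ℝ) / 2 ^ n) atTop (𝓝 0) := by
  have h := (tendsto_centralBinom_div_four_pow.comp
    (tendsto_div_const_atTop two_ne_zero)).const_mul 2
  rw [mul_zero] at h
  refine squeeze_zero (fun n => by positivity) (fun n => ?_) h
  have hpow : (4 : ℝ) ^ (n / 2) ≤ 2 ^ n := by
    rw [show (4 : ℝ) = 2 ^ 2 by norm_num, ← pow_mul]
    exact pow_le_pow_right₀ one_le_two (by omega)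
  calc (n.choose (n / 2) : ℝ) / 2 ^ n ≤ 2 * centralBinom (n / 2) / 2 ^ n := by
        gcongr; exact_mod_cast choose_half_le_two_mul_centralBinom n
    _ ≤ 2 * (centralBinom (n / 2) / 4 ^ (n / 2)) := by
        rw [← mul_div_assoc]; gcongr

end Nat

theorem one_add_pow_mul_one_sub {R : Type*} [Ring R] (q : R) (n : ℕ) :
    (1 + q) ^ n * (1 - q)
      = 1 + ∑ k ∈ range (n + 1), ((n.choose (k + 1) : ℤ) - n.choose k) • q ^ (k + 1) := by
  have hbinom : (1 + q) ^ n = ∑ k ∈ range (n + 1), n.choose k • q ^ k := by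
    simp only [add_comm (1 : R), (Commute.one_right q).add_pow, one_pow, mul_one, nsmul_eq_mul']
  have hshift : (1 + q) ^ n = 1 + ∑ k ∈ range (n + 1), n.choose (k + 1) • q ^ (k + 1) := by
    rw [hbinom, sum_range_succ' _ n, sum_range_succ (fun k => n.choose (k + 1) • q ^ (k + 1)) n,
      Nat.choose_succ_self, zero_smul, add_zero, Nat.choose_zero_right, pow_zero, one_smul,
      add_comm]
  rw [mul_sub, mul_one]
  nth_rw 1 [hshift]
  rw [add_sub_assoc, hbinom, sum_mul, ← sum_sub_distrib]
  congr 1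
  refine sum_congr rfl fun k _ => ?_
  rw [smul_mul_assoc, ← pow_succ, sub_smul, natCast_zsmul, natCast_zsmul]

theorem norm_one_add_pow_mul_one_sub_le {R : Type*} [NormedRing R] [NormOneClass R] {q : R}
    (hq : ‖q‖ ≤ 1) (n : ℕ) : ‖(1 + q) ^ n * (1 - q)‖ ≤ 2 * n.choose (n / 2) := by
  have hterm (k : ℕ) (c : ℤ) : ‖c • q ^ (k + 1)‖ ≤ |(c : ℝ)| :=
    calc ‖c • q ^ (k + 1)‖ ≤ ‖c‖ * ‖q ^ (k + 1)‖ := norm_zsmul_le _ _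
      _ ≤ ‖c‖ * 1 := by
        gcongr
        exact (norm_pow_le' q k.succ_pos).trans (pow_le_one₀ (norm_nonneg q) hq)
      _ = |(c : ℝ)| := by rw [mul_one, Int.norm_eq_abs]
  rw [one_add_pow_mul_one_sub]
  calc _ ≤ ‖(1 : R)‖ + ∑ k ∈ range (n + 1), |(n.choose (k + 1) : ℝ) - n.choose k| := by
        refine (norm_add_le _ _).trans ?_
        gcongr
        refine (norm_sum_le _ _).trans (sum_le_sum fun k _ => ?_)
        exact_mod_cast hterm k _
    _ = 2 * n.choose (n / 2) := by
        rw [Nat.sum_range_abs_choose_succ_sub_choose, norm_one]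
        ring

theorem banach_algebra_binomial_estimate_general {𝔄 : Type*} [NormedRing 𝔄] [NormOneClass 𝔄]
    (q : 𝔄) (hq : ‖q‖ ≤ 1) :
    Filter.Tendsto (fun j : ℕ => (2 : ℝ) ^ (-(j : ℤ)) * ‖(1 + q) ^ j * (1 - q)‖)
      Filter.atTop (nhds 0) := by
  have h := Nat.tendsto_choose_half_div_two_pow.const_mul 2
  rw [mul_zero] at h
  refine squeeze_zero (fun j => by positivity) (fun j => ?_) h
  rw [zpow_neg, zpow_natCast, inv_mul_eq_div, mul_div_assoc']
  gcongr
  exact norm_one_add_pow_mul_one_sub_le hq j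

/-- Key norm estimate in the proof of the 0-2 law: in a unital Banach algebra with `‖1‖ = 1`,
if `‖q‖ ≤ 1` then `2^(-j) · ‖(1 + q)^j · (1 - q)‖ → 0` as `j → ∞`. -/
theorem banach_algebra_binomial_estimate {𝔄 : Type*} [NormedRing 𝔄] [NormOneClass 𝔄]
    [CompleteSpace 𝔄] (q : 𝔄) (hq : ‖q‖ ≤ 1) :
    Filter.Tendsto (fun j : ℕ => (2 : ℝ) ^ (-(j : ℤ)) * ‖(1 + q) ^ j * (1 - q)‖)
      Filter.atTop (nhds 0) :=
  banach_algebra_binomial_estimate_general q hq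
end

section
/- (Exact value of the binomial variation sum.) For every natural number j ≥ 1, ∑_{r=1}^{j} |C(j, r) − C(j, r−1)| = 2·(C(j, ⌊j/2⌋) − 1), where C(j, r) denotes the binomial coefficient j choose r, the differences are taken in ℤ, and ⌊j/2⌋ is the integer part of j/2. -/
/-!
The sequence `r ↦ C(j, r)` rises from `C(j, 0) = 1` to its peak `C(j, ⌊j/2⌋)` and then falls back
to `C(j, j) = 1`. For such a unimodal sequence the absolute differences telescope on each side of
the peak, so the total variation is twice the rise, `2 (C(j, ⌊j/2⌋) - 1)`.
-/

open Finset

section TotalVariation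

variable {α : Type*} [AddCommGroup α] [LinearOrder α] [IsOrderedAddMonoid α] (f : ℕ → α)

theorem Finset.sum_Ico_abs_sub_of_le_succ {a b : ℕ} (hab : a ≤ b)
    (hf : ∀ i ∈ Ico a b, f i ≤ f (i + 1)) :
    ∑ i ∈ Ico a b, |f (i + 1) - f i| = f b - f a := by
  rw [← sum_Ico_sub f hab]
  exact sum_congr rfl fun i hi => abs_of_nonneg (sub_nonneg.2 (hf i hi))

theorem Finset.sum_Ico_abs_sub_of_succ_le {a b : ℕ} (hab : a ≤ b)
    (hf : ∀ i ∈ Ico a b, f (i + 1) ≤ f i) :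
    ∑ i ∈ Ico a b, |f (i + 1) - f i| = f a - f b := by
  have := sum_Ico_abs_sub_of_le_succ (fun i => -f i) hab fun i hi => neg_le_neg (hf i hi)
  simpa only [neg_sub_neg, abs_sub_comm, sub_neg_eq_add, neg_add_eq_sub] using this

theorem Finset.sum_range_abs_sub_of_unimodal {m n : ℕ} (hmn : m ≤ n)
    (hup : ∀ i < m, f i ≤ f (i + 1)) (hdown : ∀ i ∈ Ico m n, f (i + 1) ≤ f i) :
    ∑ i ∈ range n, |f (i + 1) - f i| = (f m - f 0) + (f m - f n) := by
  rw [← sum_range_add_sum_Ico _ hmn, range_eq_Ico,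
    sum_Ico_abs_sub_of_le_succ f m.zero_le fun i hi => hup i (mem_Ico.1 hi).2,
    sum_Ico_abs_sub_of_succ_le f hmn hdown]

end TotalVariation

theorem Nat.choose_succ_le_of_half_le_s4 {n k : ℕ} (h : n / 2 ≤ k) :
    n.choose (k + 1) ≤ n.choose k := by
  refine Nat.le_of_mul_le_mul_right ?_ k.succ_pos
  rw [Nat.choose_succ_right_eq]
  exact Nat.mul_le_mul_left _ (by omega)

theorem Finset.sum_Icc_one_eq_sum_range {M : Type*} [AddCommMonoid M] (g : ℕ → M) (n : ℕ) :
    ∑ r ∈ Icc 1 n, g r = ∑ i ∈ range n, g (i + 1) := by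
  rw [range_eq_Ico, sum_Ico_add' g, zero_add, Ico_add_one_right_eq_Icc]

theorem binomial_variation_sum_general (j : ℕ) :
    ∑ r ∈ Finset.Icc 1 j, |(j.choose r : ℤ) - (j.choose (r - 1) : ℤ)| =
      2 * ((j.choose (j / 2) : ℤ) - 1) := by
  simp only [sum_Icc_one_eq_sum_range, Nat.add_sub_cancel]
  rw [sum_range_abs_sub_of_unimodal (fun r => (j.choose r : ℤ))
    (j.div_le_self 2) (fun i hi => mod_cast Nat.choose_le_succ_of_lt_half_left hi)
    (fun i hi => mod_cast Nat.choose_succ_le_of_half_le_s4 (mem_Ico.1 hi).1)]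
  simp only [Nat.choose_zero_right, Nat.choose_self, Nat.cast_one]
  ring

/-- Exact value of the binomial variation sum: for `j ≥ 1`,
`∑_{r=1}^{j} |C(j,r) − C(j,r−1)| = 2·(C(j, ⌊j/2⌋) − 1)`. -/
theorem binomial_variation_sum (j : ℕ) (hj : 1 ≤ j) :
    ∑ r ∈ Finset.Icc 1 j, |(j.choose r : ℤ) - (j.choose (r - 1) : ℤ)| =
      2 * ((j.choose (j / 2) : ℤ) - 1) :=
  binomial_variation_sum_general j
end

section
/- (Lemma 2.7: order and continuity properties of the extended positive map.) In the matrix-product setting with extended map P on D(P): (i) if 0 ≤ x ≤ y in M and y ∈ D(P), then x ∈ D(P) and 0 ≤ P x ≤ P y; (ii) if (x_i)_{i∈D} is a net in M converging to x in the product topology with 0 ≤ x_i ≤ y for all i, where y ∈ D(P), then x ∈ D(P) and P x_i → P x in M. -/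
/-!
Testing a Hermitian matrix against its real quadratic forms `v ↦ re (v⋆ A v)`, which determine it by
polarization, reduces the Loewner order to the order of `ℝ`: it is closed, bounded monotone nets
converge, and a net squeezed between `0` and a null net is null.

For `0 ≤ x ≤ y` the net `Y ↦ P₀ (F_Y x)` increases and is bounded by `P y`, which gives (i).
For (ii), the tails `P z - P₀ (F_Y z)` of all `0 ≤ z ≤ y` lie between `0` and the tail of `y`, so
`P₀ (F_Y x_i) → P x_i` uniformly in `i`. Each `x ↦ P₀ (F_Y x)` is continuous, being linear on a
finite-dimensional space, and exchanging the two limits (Moore–Osgood) gives `P x_i → P x`.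
-/

open Filter Topology
open scoped Classical ComplexOrder

namespace MartinMP

variable {I : Type*} {n : I → ℕ}

/-- The product `M = ∏ s, Matrix (Fin (n s)) (Fin (n s)) ℂ` of matrix algebras. -/
abbrev MP (I : Type*) (n : I → ℕ) := ∀ s : I, Matrix (Fin (n s)) (Fin (n s)) ℂ

/-- The order on `M`: `x ≤ y` iff `(y − x) s` is positive semidefinite for every `s`. -/
def MPle (x y : MP I n) : Prop := ∀ s : I, ((y - x) s).PosSemidef

/-- `0 ≤ x`: every component of `x` is positive semidefinite. -/
def MPos (x : MP I n) : Prop := ∀ s : I, (x s).PosSemidef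

/-- The projection `F_Y` killing all coordinates outside the finite set `Y`. -/
noncomputable def FY (Y : Finset I) (x : MP I n) : MP I n := fun s => if s ∈ Y then x s else 0

/-- `x` is finitely supported. -/
def FinSupp (x : MP I n) : Prop := ∃ Y : Finset I, FY Y x = x

variable (P₀ : MP I n → MP I n)

/-- `x ∈ D(P)`: `x ≥ 0` and the net `(P₀ (F_Y x))_Y` (over finite `Y ⊆ I` ordered by
inclusion) converges in the product topology. -/
def InDP (x : MP I n) : Prop :=
  MPos x ∧ ∃ L : MP I n, Tendsto (fun Y : Finset I => P₀ (FY Y x)) atTop (nhds L)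

/-- The extension `P` of `P₀`: `P x := lim_Y P₀ (F_Y x)` when the limit exists (`0` otherwise). -/
noncomputable def Papp (x : MP I n) : MP I n :=
  if h : ∃ L : MP I n, Tendsto (fun Y : Finset I => P₀ (FY Y x)) atTop (nhds L)
  then h.choose else 0

/-- `x ∈ D(G)`: all iterates `Pᵏ x` are defined and the series `∑ₖ Pᵏ x` converges. -/
def InDG (x : MP I n) : Prop :=
  (∀ k : ℕ, InDP P₀ ((Papp P₀)^[k] x)) ∧
  ∃ L : MP I n,
    Tendsto (fun N : ℕ => ∑ k ∈ Finset.range N, (Papp P₀)^[k] x) atTop (nhds L)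

/-- The potential `G x = ∑ₖ Pᵏ x` (junk value `0` if the series does not converge). -/
noncomputable def Gval (x : MP I n) : MP I n :=
  if h : ∃ L : MP I n,
      Tendsto (fun N : ℕ => ∑ k ∈ Finset.range N, (Papp P₀)^[k] x) atTop (nhds L)
  then h.choose else 0

/-- `x` is superharmonic: `x ≥ 0`, `x ∈ D(P)` and `P x ≤ x`. -/
def Superharmonic (x : MP I n) : Prop := InDP P₀ x ∧ MPle (Papp P₀ x) x

/-- `x` is a potential: `x = G y` for some `y ∈ D(G)`. -/
def IsPotential (x : MP I n) : Prop := ∃ y : MP I n, InDG P₀ y ∧ x = Gval P₀ y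

/-- One step of the operator `(id − F_Y) ∘ P`. -/
noncomputable def QY (Y : Finset I) (z : MP I n) : MP I n :=
  Papp P₀ z - FY Y (Papp P₀ z)

end MartinMP

open scoped MatrixOrder

namespace Matrix

variable {k : Type*} [Fintype k]

lemma isClosed_setOf_posSemidef : IsClosed {A : Matrix k k ℂ | A.PosSemidef} := by
  simp only [posSemidef_iff_dotProduct_mulVec, Set.ofPred_and, Set.ofPred_forall]
  exact (isClosed_eq (by fun_prop) continuous_id).inter
    (isClosed_iInter fun v => isClosed_le continuous_const (by fun_prop))

instance : OrderClosedTopology (Matrix k k ℂ) :=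
  ⟨isClosed_setOf_posSemidef.preimage (continuous_snd.sub continuous_fst)⟩

noncomputable def quadForm (A : Matrix k k ℂ) (v : k → ℂ) : ℝ := (star v ⬝ᵥ A *ᵥ v).re

lemma IsHermitian.coe_quadForm {A : Matrix k k ℂ} (hA : A.IsHermitian) (v : k → ℂ) :
    (A.quadForm v : ℂ) = star v ⬝ᵥ A *ᵥ v :=
  Complex.ext rfl (by simpa using (hA.im_star_dotProduct_mulVec_self v).symm)

lemma quadForm_mono (v : k → ℂ) : Monotone fun A : Matrix k k ℂ => A.quadForm v := by
  intro A B hAB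
  have := (le_iff.mp hAB).re_dotProduct_nonneg v
  simp only [sub_mulVec, dotProduct_sub, map_sub, sub_nonneg] at this
  exact this

lemma continuous_quadForm (v : k → ℂ) : Continuous fun A : Matrix k k ℂ => A.quadForm v := by
  unfold quadForm
  fun_prop

variable [DecidableEq k]

lemma dotProduct_mulVec_single_add_smul_single (A : Matrix k k ℂ) (i j : k) (c : ℂ) :
    star (Pi.single i 1 + c • Pi.single j 1) ⬝ᵥ A *ᵥ (Pi.single i 1 + c • Pi.single j 1)
      = A i i + star c * A j i + c * A i j + star c * c * A j j := by
  simp only [star_add, star_smul, Pi.star_single, star_one, RCLike.star_def, mulVec_add,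
    mulVec_smul, mulVec_single, MulOpposite.op_one, one_smul, add_dotProduct, dotProduct_add,
    smul_dotProduct, dotProduct_smul, single_dotProduct, col_apply, one_mul, smul_eq_mul]
  ring

noncomputable def polarization (c : (k → ℂ) → ℝ) : Matrix k k ℂ :=
  of fun i j => (1 / 4 : ℂ) * ∑ m : Fin 4,
    star (Complex.I ^ (m : ℕ)) * c (Pi.single i 1 + Complex.I ^ (m : ℕ) • Pi.single j 1)

lemma polarization_quadForm {A : Matrix k k ℂ} (hA : A.IsHermitian) :
    polarization A.quadForm = A := by
  ext i j
  simp only [polarization, of_apply, hA.coe_quadForm, dotProduct_mulVec_single_add_smul_single,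
    Fin.sum_univ_four]
  simp only [Fin.isValue, Fin.coe_ofNat_eq_mod, Nat.reduceMod, pow_zero, pow_one, Complex.I_sq,
    Complex.I_pow_three, star_one, star_neg, Complex.star_def, Complex.conj_I, neg_neg]
  linear_combination (A j i - A i j) / 2 * Complex.I_sq

omit [Fintype k] in
lemma continuous_polarization : Continuous (polarization : ((k → ℂ) → ℝ) → Matrix k k ℂ) := by
  refine continuous_pi fun i => continuous_pi fun j => ?_
  simp only [polarization, of_apply]
  fun_prop

lemma tendsto_polarization {α : Type*} {l : Filter α} {f : α → Matrix k k ℂ}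
    {c : (k → ℂ) → ℝ} (hf : ∀ a, (f a).IsHermitian)
    (h : ∀ v, Tendsto (fun a => (f a).quadForm v) l (𝓝 (c v))) :
    Tendsto f l (𝓝 (polarization c)) := by
  have := (continuous_polarization.tendsto c).comp (tendsto_pi_nhds.2 h)
  simpa only [Function.comp_def, polarization_quadForm (hf _)] using this

lemma tendsto_of_forall_tendsto_quadForm {α : Type*} {l : Filter α} {f : α → Matrix k k ℂ}
    {A : Matrix k k ℂ} (hf : ∀ a, (f a).IsHermitian) (hA : A.IsHermitian)
    (h : ∀ v, Tendsto (fun a => (f a).quadForm v) l (𝓝 (A.quadForm v))) :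
    Tendsto f l (𝓝 A) :=
  polarization_quadForm hA ▸ tendsto_polarization hf h

lemma exists_tendsto_of_monotone_of_le {κ : Type*} [Preorder κ] {f : κ → Matrix k k ℂ}
    {B : Matrix k k ℂ} (hf : ∀ a, (f a).IsHermitian) (hmono : Monotone f) (hB : ∀ a, f a ≤ B) :
    ∃ A, Tendsto f atTop (𝓝 A) :=
  ⟨_, tendsto_polarization hf fun v => tendsto_atTop_ciSup ((quadForm_mono v).comp hmono)
    ⟨B.quadForm v, by rintro _ ⟨a, rfl⟩; exact quadForm_mono v (hB a)⟩⟩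

lemma tendsto_zero_of_nonneg_of_le {α : Type*} {l : Filter α} {f g : α → Matrix k k ℂ}
    (hf : ∀ a, 0 ≤ f a) (hfg : ∀ a, f a ≤ g a) (hg : Tendsto g l (𝓝 0)) :
    Tendsto f l (𝓝 0) :=
  tendsto_of_forall_tendsto_quadForm (fun a => (nonneg_iff_posSemidef.1 (hf a)).isHermitian)
    isHermitian_zero
    fun v => tendsto_of_tendsto_of_tendsto_of_le_of_le tendsto_const_nhds
      (((continuous_quadForm v).tendsto 0).comp hg) (fun a => quadForm_mono v (hf a))
      (fun a => quadForm_mono v (hfg a))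

end Matrix

namespace MartinMP

variable {I : Type*} {n : I → ℕ}

lemma mPle_iff_le {x y : MP I n} : MPle x y ↔ x ≤ y := Iff.rfl

lemma mPos_iff_nonneg {x : MP I n} : MPos x ↔ 0 ≤ x :=
  forall_congr' fun _ => Matrix.nonneg_iff_posSemidef.symm

lemma exists_tendsto_of_monotone_of_le {κ : Type*} [Preorder κ] {f : κ → MP I n} {B : MP I n}
    (hf : ∀ a, 0 ≤ f a) (hmono : Monotone f) (hB : ∀ a, f a ≤ B) :
    ∃ A, Tendsto f atTop (𝓝 A) := by
  choose A hA using fun s => Matrix.exists_tendsto_of_monotone_of_le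
    (fun a => (Matrix.nonneg_iff_posSemidef.1 (hf a s)).isHermitian) (fun a b h => hmono h s)
    (fun a => hB a s)
  exact ⟨A, tendsto_pi_nhds.2 hA⟩

lemma tendsto_zero_of_nonneg_of_le {α : Type*} {l : Filter α} {f g : α → MP I n}
    (hf : ∀ a, 0 ≤ f a) (hfg : ∀ a, f a ≤ g a) (hg : Tendsto g l (𝓝 0)) :
    Tendsto f l (𝓝 0) :=
  tendsto_pi_nhds.2 fun s => Matrix.tendsto_zero_of_nonneg_of_le (fun a => hf a s)
    (fun a => hfg a s) (tendsto_pi_nhds.1 hg s)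

lemma FY_nonneg {x : MP I n} (hx : 0 ≤ x) (Y : Finset I) : 0 ≤ FY Y x := by
  intro s
  by_cases h : s ∈ Y
  · simpa [FY, h] using hx s
  · simp [FY, h]

lemma FY_add (Y : Finset I) (x y : MP I n) : FY Y (x + y) = FY Y x + FY Y y := by
  funext s
  by_cases h : s ∈ Y <;> simp [FY, h]

lemma FY_eq_add_FY_sdiff {Y Z : Finset I} (h : Y ⊆ Z) (x : MP I n) :
    FY Z x = FY Y x + FY (Z \ Y) x := by
  funext s
  by_cases hY : s ∈ Y
  · simp [FY, hY, h hY]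
  · by_cases hZ : s ∈ Z <;> simp [FY, hY, hZ]

lemma finSupp_FY (Y : Finset I) (x : MP I n) : FinSupp (FY Y x) :=
  ⟨Y, by funext s; by_cases h : s ∈ Y <;> simp [FY, h]⟩

noncomputable def extendByZero (Y : Finset I) :
    (∀ s : Y, Matrix (Fin (n s)) (Fin (n s)) ℂ) →ₗ[ℂ] MP I n :=
  LinearMap.pi fun s => if h : s ∈ Y then LinearMap.proj (⟨s, h⟩ : Y) else 0

lemma FY_eq_extendByZero (Y : Finset I) (x : MP I n) : FY Y x = extendByZero Y fun s => x s := by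
  funext s
  by_cases h : s ∈ Y <;> simp [FY, extendByZero, h]

lemma finSupp_extendByZero (Y : Finset I) (w : ∀ s : Y, Matrix (Fin (n s)) (Fin (n s)) ℂ) :
    FinSupp (extendByZero Y w) :=
  ⟨Y, by funext s; by_cases h : s ∈ Y <;> simp [FY, extendByZero, h]⟩

variable {P₀ : MP I n → MP I n}

lemma tendsto_Papp {x : MP I n} (hx : InDP P₀ x) :
    Tendsto (fun Y : Finset I => P₀ (FY Y x)) atTop (𝓝 (Papp P₀ x)) := by
  rw [Papp, dif_pos hx.2]
  exact hx.2.choose_spec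

section

variable (hadd : ∀ x y : MP I n, FinSupp x → FinSupp y → P₀ (x + y) = P₀ x + P₀ y)
  (hsmul : ∀ (c : ℂ) (x : MP I n), FinSupp x → P₀ (c • x) = c • P₀ x)
  (hpos : ∀ x : MP I n, FinSupp x → MPos x → MPos (P₀ x))

include hadd hsmul in
lemma continuous_P₀_FY (Y : Finset I) : Continuous fun x => P₀ (FY Y x) := by
  let L : (∀ s : Y, Matrix (Fin (n s)) (Fin (n s)) ℂ) →ₗ[ℂ] MP I n :=
    { toFun := fun w => P₀ (extendByZero Y w)
      map_add' := fun v w => by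
        rw [map_add, hadd _ _ (finSupp_extendByZero Y v) (finSupp_extendByZero Y w)]
      map_smul' := fun c w => by
        rw [map_smul, hsmul _ _ (finSupp_extendByZero Y w)]
        rfl }
  simp only [FY_eq_extendByZero]
  exact L.continuous_of_finiteDimensional.comp (continuous_pi fun s => continuous_apply _)

include hpos in
lemma P₀_FY_nonneg {x : MP I n} (hx : 0 ≤ x) (Y : Finset I) : 0 ≤ P₀ (FY Y x) :=
  mPos_iff_nonneg.1 (hpos _ (finSupp_FY Y x) (mPos_iff_nonneg.2 (FY_nonneg hx Y)))

include hadd hpos in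
lemma P₀_FY_mono {x y : MP I n} (hxy : x ≤ y) (Y : Finset I) : P₀ (FY Y x) ≤ P₀ (FY Y y) := by
  rw [← add_sub_cancel x y, FY_add, hadd _ _ (finSupp_FY Y x) (finSupp_FY Y _)]
  exact le_add_of_nonneg_right (P₀_FY_nonneg hpos (sub_nonneg.2 hxy) Y)

include hadd in
lemma P₀_FY_sub_P₀_FY {Y Z : Finset I} (h : Y ⊆ Z) (x : MP I n) :
    P₀ (FY Z x) - P₀ (FY Y x) = P₀ (FY (Z \ Y) x) := by
  rw [FY_eq_add_FY_sdiff h, hadd _ _ (finSupp_FY Y x) (finSupp_FY _ x), add_sub_cancel_left]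

include hadd hpos in
lemma monotone_P₀_FY {x : MP I n} (hx : 0 ≤ x) : Monotone fun Y => P₀ (FY Y x) := fun Y Z h =>
  sub_nonneg.1 (P₀_FY_sub_P₀_FY hadd h x ▸ P₀_FY_nonneg hpos hx (Z \ Y))

include hadd hpos in
lemma P₀_FY_le_Papp {x : MP I n} (hx : InDP P₀ x) (Y : Finset I) : P₀ (FY Y x) ≤ Papp P₀ x :=
  (monotone_P₀_FY hadd hpos (mPos_iff_nonneg.1 hx.1)).ge_of_tendsto (tendsto_Papp hx) Y

include hadd hpos in
lemma inDP_of_le {x y : MP I n} (hx : 0 ≤ x) (hxy : x ≤ y) (hy : InDP P₀ y) : InDP P₀ x :=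
  ⟨mPos_iff_nonneg.2 hx, exists_tendsto_of_monotone_of_le (P₀_FY_nonneg hpos hx)
    (monotone_P₀_FY hadd hpos hx)
    fun Y => (P₀_FY_mono hadd hpos hxy Y).trans (P₀_FY_le_Papp hadd hpos hy Y)⟩

include hpos in
lemma Papp_nonneg {x : MP I n} (hx : InDP P₀ x) : 0 ≤ Papp P₀ x :=
  ge_of_tendsto' (tendsto_Papp hx) (P₀_FY_nonneg hpos (mPos_iff_nonneg.1 hx.1))

include hadd hpos in
lemma Papp_mono {x y : MP I n} (hxy : x ≤ y) (hx : InDP P₀ x) (hy : InDP P₀ y) :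
    Papp P₀ x ≤ Papp P₀ y :=
  le_of_tendsto_of_tendsto' (tendsto_Papp hx) (tendsto_Papp hy) (P₀_FY_mono hadd hpos hxy)

include hadd hpos in
lemma Papp_sub_P₀_FY_le {y z : MP I n} (hz : 0 ≤ z) (hzy : z ≤ y) (hy : InDP P₀ y)
    (Y : Finset I) : Papp P₀ z - P₀ (FY Y z) ≤ Papp P₀ y - P₀ (FY Y y) := by
  refine le_of_tendsto_of_tendsto
    ((tendsto_Papp (inDP_of_le hadd hpos hz hzy hy)).sub_const _)
    ((tendsto_Papp hy).sub_const _) (eventually_atTop.2 ⟨Y, fun Z hYZ => ?_⟩)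
  simp only [P₀_FY_sub_P₀_FY hadd hYZ]
  exact P₀_FY_mono hadd hpos hzy _

include hadd hpos in
lemma tendstoUniformly_P₀_FY {ι : Type*} {z : ι → MP I n} {y : MP I n} (hz : ∀ i, 0 ≤ z i)
    (hzy : ∀ i, z i ≤ y) (hy : InDP P₀ y) :
    TendstoUniformly (fun Y i => P₀ (FY Y (z i))) (fun i => Papp P₀ (z i)) atTop := by
  rw [tendstoUniformly_iff_tendsto, uniformity_eq_comap_nhds_zero (MP I n), tendsto_comap_iff]
  have hzD (i : ι) : InDP P₀ (z i) := inDP_of_le hadd hpos (hz i) (hzy i) hy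
  have htail :
      Tendsto (fun q : Finset I × ι => Papp P₀ y - P₀ (FY q.1 y)) (atTop ×ˢ ⊤) (𝓝 0) := by
    have h := ((tendsto_Papp hy).const_sub (Papp P₀ y)).comp
      (tendsto_fst (f := atTop) (g := (⊤ : Filter ι)))
    rwa [sub_self] at h
  have hsqueeze := tendsto_zero_of_nonneg_of_le
    (f := fun q : Finset I × ι => Papp P₀ (z q.2) - P₀ (FY q.1 (z q.2)))
    (fun q => sub_nonneg.2 (P₀_FY_le_Papp hadd hpos (hzD q.2) q.1))
    (fun q => Papp_sub_P₀_FY_le hadd hpos (hz q.2) (hzy q.2) hy q.1) htail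
  rw [← neg_zero]
  exact hsqueeze.neg.congr fun q => neg_sub _ _

end

/-- Lemma 2.7: order and continuity properties of the extended positive map `P`.
(i) If `0 ≤ x ≤ y` in `M` and `y ∈ D(P)`, then `x ∈ D(P)` and `0 ≤ P x ≤ P y`.
(ii) If a net `(x_i)` (indexed by any filter `l ≠ ⊥`) converges to `x` in the product topology
with `0 ≤ x_i ≤ y` for all `i`, where `y ∈ D(P)`, then `x ∈ D(P)` and `P x_i → P x` in `M`. -/
theorem extended_map_order_and_continuity
    {I : Type*} {n : I → ℕ} (P₀ : MP I n → MP I n)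
    (hadd : ∀ x y : MP I n, FinSupp x → FinSupp y → P₀ (x + y) = P₀ x + P₀ y)
    (hsmul : ∀ (c : ℂ) (x : MP I n), FinSupp x → P₀ (c • x) = c • P₀ x)
    (hpos : ∀ x : MP I n, FinSupp x → MPos x → MPos (P₀ x))
    {ι : Type*} (l : Filter ι) (hl : l.NeBot) :
    (∀ x y : MP I n, MPos x → MPle x y → InDP P₀ y →
      InDP P₀ x ∧ MPos (Papp P₀ x) ∧ MPle (Papp P₀ x) (Papp P₀ y)) ∧
    (∀ (xi : ι → MP I n) (x y : MP I n), InDP P₀ y →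
      (∀ i, MPos (xi i)) → (∀ i, MPle (xi i) y) →
      Tendsto xi l (nhds x) →
      InDP P₀ x ∧ Tendsto (fun i => Papp P₀ (xi i)) l (nhds (Papp P₀ x))) := by
  simp only [mPos_iff_nonneg, mPle_iff_le]
  refine ⟨fun x y hx hxy hy => ?_, fun xi x y hy hxi hxiy hlim => ?_⟩
  · have hxD := inDP_of_le hadd hpos hx hxy hy
    exact ⟨hxD, Papp_nonneg hpos hxD, Papp_mono hadd hpos hxy hxD hy⟩
  · have := hl
    have hxD := inDP_of_le hadd hpos (ge_of_tendsto' hlim hxi) (le_of_tendsto' hlim hxiy) hy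
    refine ⟨hxD, (tendstoUniformly_P₀_FY hadd hpos hxi hxiy hy).tendsto_of_eventually_tendsto
      (.of_forall fun Y => ((continuous_P₀_FY hadd hsmul Y).tendsto x).comp hlim)
      (tendsto_Papp hxD)⟩

end MartinMP
end

section
/- (Degree and leading coefficient of the Martin-kernel polynomials, from the proof of Proposition 4.9.) Let q, c be real numbers with 0 < q < 1 and 0 < c < 1. Define polynomials p_n ∈ ℝ[X] by p_0 = 1 and the recurrence p_{n+1}(x) = c·p_n(x)·x − c⁻¹·p_n(q^{−2}x)·(x − 1). Then for every n, p_n has degree exactly n, with leading coefficient (−1)ⁿ · q^{−n(n−1)} · c^{−n} · ∏_{i=0}^{n−1} (1 − c² q^{2i}); in particular this leading coefficient is nonzero. -/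
/-!
The recurrence raises the degree by one: the coefficient of `x^(n+1)` in
`c p(x) x - c⁻¹ p(a x)(x - 1)` is `(c - c⁻¹ aⁿ)` times the leading coefficient of `p`, and with
`a = q⁻²` the factor `c - c⁻¹ q⁻²ⁿ = -(1 - c² q²ⁿ) / (c q²ⁿ)` is nonzero because `c qⁿ < 1`.
Multiplying these factors gives the closed form.
-/

namespace Polynomial

variable {R : Type*} [CommRing R]

theorem natDegree_dilation_recurrence_le (u v a : R) (P : R[X]) :
    (C u * P * X - C v * P.comp (C a * X) * (X - 1)).natDegree ≤ P.natDegree + 1 := by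
  have hlinear : (C a * X).natDegree ≤ 1 := (natDegree_C_mul_le a X).trans natDegree_X_le
  have hcomp : (P.comp (C a * X)).natDegree ≤ P.natDegree :=
    natDegree_comp_le.trans (mul_le_of_le_one_right' hlinear)
  refine (natDegree_sub_le _ _).trans (max_le ?_ ?_)
  · exact natDegree_mul_le_of_le (natDegree_C_mul_le _ _) natDegree_X_le
  · refine natDegree_mul_le_of_le ((natDegree_C_mul_le _ _).trans hcomp) ?_
    simpa using natDegree_X_sub_C_le (1 : R)

theorem coeff_dilation_recurrence_natDegree_succ (u v a : R) (P : R[X]) :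
    (C u * P * X - C v * P.comp (C a * X) * (X - 1)).coeff (P.natDegree + 1) =
      (u - v * a ^ P.natDegree) * P.leadingCoeff := by
  have hvanish : P.coeff (P.natDegree + 1) = 0 := coeff_eq_zero_of_natDegree_lt (Nat.lt_succ_self _)
  rw [mul_sub, mul_one, coeff_sub, coeff_sub, coeff_mul_X, coeff_mul_X, coeff_C_mul, coeff_C_mul,
    coeff_C_mul, comp_C_mul_X_coeff, comp_C_mul_X_coeff, hvanish, leadingCoeff]
  ring

theorem natDegree_dilation_recurrence_and_leadingCoeff {u v a L : R} {P : R[X]} {n : ℕ}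
    (hdeg : P.natDegree = n) (hlc : P.leadingCoeff = L) (h : (u - v * a ^ n) * L ≠ 0) :
    (C u * P * X - C v * P.comp (C a * X) * (X - 1)).natDegree = n + 1 ∧
      (C u * P * X - C v * P.comp (C a * X) * (X - 1)).leadingCoeff = (u - v * a ^ n) * L := by
  subst hdeg hlc
  rw [← coeff_dilation_recurrence_natDegree_succ] at h ⊢
  have hdeg := natDegree_eq_of_le_of_coeff_ne_zero (natDegree_dilation_recurrence_le u v a P) h
  exact ⟨hdeg, by rw [leadingCoeff, hdeg]⟩

end Polynomial

open Polynomial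

def martinLeadingCoeff {K : Type*} [Field K] (q c : K) (n : ℕ) : K :=
  (-1) ^ n * (q ^ (n * (n - 1)))⁻¹ * (c ^ n)⁻¹ * ∏ i ∈ Finset.range n, (1 - c ^ 2 * q ^ (2 * i))

theorem martinLeadingCoeff_succ {K : Type*} [Field K] {q c : K} (hq : q ≠ 0) (hc : c ≠ 0)
    (n : ℕ) :
    martinLeadingCoeff q c (n + 1) = (c - c⁻¹ * ((q ^ 2)⁻¹) ^ n) * martinLeadingCoeff q c n := by
  have hexp : (n + 1) * (n + 1 - 1) = n * (n - 1) + 2 * n := by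
    rcases n with _ | n
    · rfl
    · rw [Nat.add_sub_cancel, Nat.add_sub_cancel]
      ring
  rw [martinLeadingCoeff, martinLeadingCoeff, Finset.prod_range_succ, hexp, inv_pow, ← pow_mul]
  field_simp
  ring

theorem martinLeadingCoeff_ne_zero {q c : ℝ} (hq0 : 0 < q) (hq1 : q < 1) (hc0 : 0 < c)
    (hc1 : c < 1) (n : ℕ) : martinLeadingCoeff q c n ≠ 0 := by
  have hfactor : ∀ i ∈ Finset.range n, 1 - c ^ 2 * q ^ (2 * i) ≠ 0 := fun i _ => by
    have : q ^ (2 * i) ≤ 1 := pow_le_one₀ hq0.le hq1.le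
    nlinarith [pow_pos hq0 (2 * i)]
  unfold martinLeadingCoeff
  have hprod := Finset.prod_ne_zero_iff.mpr hfactor
  have hq := hq0.ne'
  have hc := hc0.ne'
  positivity

/-- Degree and leading coefficient of the Martin-kernel polynomials (proof of Proposition 4.9):
if `p 0 = 1` and `p (n+1) (x) = c * p n (x) * x - c⁻¹ * p n (q⁻² x) * (x - 1)` with
`0 < q < 1` and `0 < c < 1`, then `p n` has degree exactly `n` and leading coefficient
`(-1)^n * q^(-n(n-1)) * c^(-n) * ∏_{i<n} (1 - c² q^(2i))`, which is nonzero. -/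
theorem martin_kernel_polynomials_degree (q c : ℝ)
    (hq0 : 0 < q) (hq1 : q < 1) (hc0 : 0 < c) (hc1 : c < 1)
    (p : ℕ → Polynomial ℝ) (hp0 : p 0 = 1)
    (hrec : ∀ n : ℕ, p (n + 1) =
      C c * p n * X - C c⁻¹ * ((p n).comp (C (q ^ 2)⁻¹ * X)) * (X - 1)) :
    ∀ n : ℕ, (p n).degree = n ∧
      (p n).leadingCoeff =
        (-1) ^ n * (q ^ (n * (n - 1)))⁻¹ * (c ^ n)⁻¹ *
          ∏ i ∈ Finset.range n, (1 - c ^ 2 * q ^ (2 * i)) ∧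
      (p n).leadingCoeff ≠ 0 := by
  have hlc_ne := martinLeadingCoeff_ne_zero hq0 hq1 hc0 hc1
  have hdeg_lc : ∀ n, (p n).natDegree = n ∧ (p n).leadingCoeff = martinLeadingCoeff q c n := by
    intro n
    induction n with
    | zero => simp [hp0, martinLeadingCoeff]
    | succ n ih =>
      obtain ⟨hdeg, hlc⟩ := ih
      have hsucc := martinLeadingCoeff_succ hq0.ne' hc0.ne' n
      rw [hrec n, hsucc]
      exact natDegree_dilation_recurrence_and_leadingCoeff hdeg hlc (hsucc ▸ hlc_ne (n + 1))
  intro n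
  obtain ⟨hdeg, hlc⟩ := hdeg_lc n
  have hp_ne : p n ≠ 0 := leadingCoeff_ne_zero.mp (hlc ▸ hlc_ne n)
  exact ⟨by rw [degree_eq_natDegree hp_ne, hdeg], hlc, hlc ▸ hlc_ne n⟩
end
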